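/- arXiv:1703.08761 — 4 statements merged into one kernel-verified Lean document; each statement's English description precedes it below -/
import Mathlib

section
/- Let d > 2 and θ ≥ 1. Define g(a) = ((d-2)e^{-a(θ+d-2)} + θ)/(θ+d-2))^{-1/(d-2)} - 1. Then ∫₀^∞ θ e^{-t(θ+d-2)} (1+g(t))^{d-2} dt = (θ/(d-2))·log((d+θ-2)/θ). -/
open Real MeasureTheory Filter Topology Set

/-!
With `a = d - 2`, `b = θ` and `c = θ + d - 2`, the exponent `-1/(d-2)` in `1 + g` cancels the
power `d - 2`, so the integrand is `θ c e^{-tc} / (a e^{-tc} + b)`. This is the derivative of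
`-(θ/a) log (a e^{-tc} + b)`, which tends to `-(θ/a) log b` at infinity.
-/

section ExpRational

variable {a b c : ℝ}

lemma hasDerivAt_log_mul_exp_neg_add (t : ℝ) (hpos : 0 < a * exp (-(t * c)) + b) :
    HasDerivAt (fun s => log (a * exp (-(s * c)) + b))
      (-(a * c * exp (-(t * c))) / (a * exp (-(t * c)) + b)) t := by
  have hinner : HasDerivAt (fun s => a * exp (-(s * c)) + b) (a * (exp (-(t * c)) * -c)) t :=
    (((hasDerivAt_mul_const c).neg).exp.const_mul a).add_const b
  convert hinner.log hpos.ne' using 1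
  ring

lemma tendsto_log_mul_exp_neg_add_atTop (hb : 0 < b) (hc : 0 < c) :
    Tendsto (fun t => log (a * exp (-(t * c)) + b)) atTop (𝓝 (log b)) := by
  have hexp : Tendsto (fun t => exp (-(t * c))) atTop (𝓝 0) :=
    tendsto_exp_atBot.comp (tendsto_neg_atTop_atBot.comp (tendsto_id.atTop_mul_const hc))
  have hsum : Tendsto (fun t => a * exp (-(t * c)) + b) atTop (𝓝 b) := by
    simpa using (hexp.const_mul a).add_const b
  exact (continuousAt_log hb.ne').tendsto.comp hsum

theorem integral_Ioi_exp_neg_div_mul_exp_neg_add (ha : 0 < a) (hb : 0 < b) (hc : 0 < c) :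
    ∫ t in Ioi (0 : ℝ), c * exp (-(t * c)) / (a * exp (-(t * c)) + b)
      = log ((a + b) / b) / a := by
  have hpos : ∀ t, 0 < a * exp (-(t * c)) + b := fun t => by positivity
  have hderiv : ∀ t, HasDerivAt (fun s => -log (a * exp (-(s * c)) + b) / a)
      (c * exp (-(t * c)) / (a * exp (-(t * c)) + b)) t := fun t => by
    refine ((hasDerivAt_log_mul_exp_neg_add t (hpos t)).neg.div_const a).congr_deriv ?_
    field_simp
  have hlim : Tendsto (fun t => -log (a * exp (-(t * c)) + b) / a) atTop (𝓝 (-log b / a)) :=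
    ((tendsto_log_mul_exp_neg_add_atTop hb hc).neg).div_const a
  rw [integral_Ioi_of_hasDerivAt_of_nonneg' (fun t _ => hderiv t)
    (fun t _ => (div_pos (by positivity) (hpos t)).le) hlim]
  simp only [zero_mul, neg_zero, exp_zero, mul_one]
  rw [log_div (by positivity) hb.ne']
  ring

end ExpRational

/-- the detection-probability integral for the first-timestamp estimator
under diffusion evaluates to `(θ/(d-2))·log((d+θ-2)/θ)`. -/
theorem diffusion_first_timestamp_integral (d θ : ℝ) (hd : 2 < d) (hθ : 1 ≤ θ)
    (g : ℝ → ℝ)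
    (hg : ∀ a : ℝ, g a =
      (((d - 2) * Real.exp (-(a * (θ + d - 2))) + θ) / (θ + d - 2)) ^ (-(1 / (d - 2))) - 1) :
    ∫ t in Set.Ioi (0 : ℝ), θ * Real.exp (-(t * (θ + d - 2))) * (1 + g t) ^ (d - 2)
      = (θ / (d - 2)) * Real.log ((d + θ - 2) / θ) := by
  set c := θ + d - 2
  have hθ0 : 0 < θ := by linarith
  have ha : 0 < d - 2 := by linarith
  have hc : 0 < c := by show 0 < θ + d - 2; linarith
  have hintegrand : ∀ t, θ * exp (-(t * c)) * (1 + g t) ^ (d - 2)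
      = θ * (c * exp (-(t * c)) / ((d - 2) * exp (-(t * c)) + θ)) := fun t => by
    have hX : 0 ≤ ((d - 2) * exp (-(t * c)) + θ) / c := by positivity
    rw [hg t, add_sub_cancel, ← rpow_mul hX, neg_mul, one_div_mul_cancel ha.ne', rpow_neg_one,
      inv_div]
    ring
  simp_rw [hintegrand]
  rw [integral_const_mul, integral_Ioi_exp_neg_div_mul_exp_neg_add ha hθ0 hc]
  rw [show d - 2 + θ = d + θ - 2 by ring]
  ring
end

section
/- Let G be a tree and let x, y, v, w be vertices such that v and w are adjacent, the path from x to y passes through w then v (in that order), the hop distance h(x,v) = a-1, h(x,w) = a-2, h(y,w) = b-1, h(y,v) = b-2 for integers a,b ≥ 2. Then the set {z : h(z,x) ≤ a-1 and h(z,y) ≤ b-1} equals {v, w}. -/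
open SimpleGraph

/-- In a tree, every path realizes the distance. -/
private lemma tree_path_length {V : Type*} {G : SimpleGraph V} (hT : G.IsTree)
    {u v : V} (p : G.Walk u v) (hp : p.IsPath) : p.length = G.dist u v := by
  obtain ⟨q, hq, hql⟩ := (hT.isConnected u v).exists_path_of_dist
  have := hT.IsAcyclic.path_unique ⟨p, hp⟩ ⟨q, hq⟩
  rw [show p = q from congrArg Subtype.val this, hql]

/-- In a tree, adjacent vertices have distances to any vertex differing by exactly 1. -/
private lemma tree_adj_dist {V : Type*} {G : SimpleGraph V} (hT : G.IsTree)
    {u u' : V} (h : G.Adj u u') (v : V) :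
    G.dist v u' = G.dist v u + 1 ∨ G.dist v u = G.dist v u' + 1 := by
  classical
  have hd1 : G.dist u u' = 1 := SimpleGraph.dist_eq_one_iff_adj.mpr h
  have hd1' : G.dist u' u = 1 := SimpleGraph.dist_eq_one_iff_adj.mpr h.symm
  have htri : G.dist v u' ≤ G.dist v u + 1 := by
    have := hT.isConnected.dist_triangle (u := v) (v := u) (w := u')
    omega
  have htri' : G.dist v u ≤ G.dist v u' + 1 := by
    have := hT.isConnected.dist_triangle (u := v) (v := u') (w := u)
    omega
  have hne : G.dist v u ≠ G.dist v u' := by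
    intro heq
    obtain ⟨p, hp, hpl⟩ := (hT.isConnected v u).exists_path_of_dist
    by_cases hmem : u' ∈ p.support
    · have h1 : (p.takeUntil u' hmem).length = G.dist v u' :=
        tree_path_length hT _ (hp.takeUntil hmem)
      have h2 : (p.takeUntil u' hmem).length + (p.dropUntil u' hmem).length = p.length := by
        rw [← SimpleGraph.Walk.length_append, p.take_spec hmem]
      have h3 : (p.dropUntil u' hmem).length = 0 := by omega
      exact h.ne' (SimpleGraph.Walk.eq_of_length_eq_zero h3) |>.elim
    · have hp' : (SimpleGraph.Walk.cons h.symm p.reverse).IsPath := by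
        rw [SimpleGraph.Walk.cons_isPath_iff]
        refine ⟨hp.reverse, ?_⟩
        simpa [SimpleGraph.Walk.support_reverse] using hmem
      have := tree_path_length hT _ hp'
      rw [SimpleGraph.Walk.length_cons, SimpleGraph.Walk.length_reverse, hpl] at this
      rw [SimpleGraph.dist_comm (u := u') (v := v)] at this
      omega
  omega

/-- In a tree, walk lengths have the same parity as the distance. -/
private lemma tree_walk_parity {V : Type*} {G : SimpleGraph V} (hT : G.IsTree)
    {u v : V} (p : G.Walk u v) : p.length % 2 = G.dist u v % 2 := by
  induction p with
  | nil => simp [SimpleGraph.dist_self]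
  | @cons u u' v h p ih =>
    have := tree_adj_dist hT h v
    rw [SimpleGraph.dist_comm (u := v) (v := u), SimpleGraph.dist_comm (u := v) (v := u')] at this
    rw [SimpleGraph.Walk.length_cons]
    omega

/-- In a tree, a point on the geodesic between `x` and `y` is determined by its
distance to `x`. -/
private lemma tree_on_path_unique {V : Type*} {G : SimpleGraph V} (hT : G.IsTree)
    {x y z z' : V}
    (hz : G.dist x z + G.dist z y = G.dist x y)
    (hz' : G.dist x z' + G.dist z' y = G.dist x y)
    (heq : G.dist x z = G.dist x z') : z = z' := by
  obtain ⟨p1, hp1, hl1⟩ := (hT.isConnected x z).exists_path_of_dist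
  obtain ⟨p2, hp2, hl2⟩ := (hT.isConnected z y).exists_path_of_dist
  obtain ⟨q1, hq1, hl1'⟩ := (hT.isConnected x z').exists_path_of_dist
  obtain ⟨q2, hq2, hl2'⟩ := (hT.isConnected z' y).exists_path_of_dist
  have hWlen : (p1.append p2).length = G.dist x y := by
    rw [SimpleGraph.Walk.length_append, hl1, hl2, hz]
  have hQlen : (q1.append q2).length = G.dist x y := by
    rw [SimpleGraph.Walk.length_append, hl1', hl2', hz']
  have hW : (p1.append p2).IsPath := SimpleGraph.Walk.isPath_of_length_eq_dist _ hWlen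
  have hQ : (q1.append q2).IsPath := SimpleGraph.Walk.isPath_of_length_eq_dist _ hQlen
  have hWQ : p1.append p2 = q1.append q2 :=
    congrArg Subtype.val (hT.IsAcyclic.path_unique ⟨_, hW⟩ ⟨_, hQ⟩)
  have h1 : (p1.append p2).getVert p1.length = z := by
    rw [SimpleGraph.Walk.getVert_append]
    simp [SimpleGraph.Walk.getVert_zero]
  have h2 : (q1.append q2).getVert q1.length = z' := by
    rw [SimpleGraph.Walk.getVert_append]
    simp [SimpleGraph.Walk.getVert_zero]
  have hll : p1.length = q1.length := by rw [hl1, hl1', heq]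
  rw [← h1, ← h2, hWQ, hll]

/-- in a tree, the intersection of the ball of radius `a-1` around `x`
and the ball of radius `b-1` around `y` is exactly `{v, w}`, where `v, w` are the two
adjacent vertices on the `x`–`y` path at the prescribed distances. -/
theorem ball_intersection_two_nodes {V : Type*} (G : SimpleGraph V) (hT : G.IsTree)
    (x y v w : V) (a b : ℕ) (ha : 2 ≤ a) (hb : 2 ≤ b)
    (hadj : G.Adj v w)
    (hxv : G.dist x v = a - 1) (hxw : G.dist x w = a - 2)
    (hyw : G.dist y w = b - 1) (hyv : G.dist y v = b - 2)
    (hxy : G.dist x y = (a - 2) + (b - 2) + 1) :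
    {z : V | G.dist z x ≤ a - 1 ∧ G.dist z y ≤ b - 1} = {v, w} := by
  ext z
  simp only [Set.mem_setOf_eq, Set.mem_insert_iff, Set.mem_singleton_iff]
  constructor
  · rintro ⟨hzx, hzy⟩
    -- triangle inequality
    have htri : G.dist x y ≤ G.dist x z + G.dist z y := hT.isConnected.dist_triangle
    rw [SimpleGraph.dist_comm (u := z) (v := x)] at hzx
    -- parity
    obtain ⟨p1, hp1, hl1⟩ := (hT.isConnected x z).exists_path_of_dist
    obtain ⟨p2, hp2, hl2⟩ := (hT.isConnected z y).exists_path_of_dist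
    have hpar := tree_walk_parity hT (p1.append p2)
    rw [SimpleGraph.Walk.length_append, hl1, hl2] at hpar
    have hsum : G.dist x z + G.dist z y = G.dist x y := by omega
    have hcase : G.dist x z = a - 1 ∨ G.dist x z = a - 2 := by omega
    rcases hcase with hc | hc
    · left
      refine tree_on_path_unique hT hsum ?_ (by rw [hc, hxv])
      rw [hxv, SimpleGraph.dist_comm (u := v) (v := y), hyv]
      omega
    · right
      refine tree_on_path_unique hT hsum ?_ (by rw [hc, hxw])
      rw [hxw, SimpleGraph.dist_comm (u := w) (v := y), hyw]
      omega
  · rintro (rfl | rfl)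
    · rw [SimpleGraph.dist_comm (u := z) (v := x), SimpleGraph.dist_comm (u := z) (v := y), hxv, hyv]
      omega
    · rw [SimpleGraph.dist_comm (u := z) (v := x), SimpleGraph.dist_comm (u := z) (v := y), hxw, hyw]
      omega
end

section
/- For fixed integer d ≥ 3, the function θ ↦ (θ/(d-2))·log((d+θ-2)/θ) is strictly increasing and strictly concave in θ on (0, ∞), and tends to 1 as θ → ∞. -/
/-!
With `c = d - 2 > 0`, `f θ = θ / c * log ((θ + c) / θ)` has derivative
`(log ((θ + c) / θ) - c / (θ + c)) / c`, which is positive because `log x > 1 - 1 / x` for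
`x ≠ 1`, and second derivative `-c / (θ * (θ + c) ^ 2) < 0`. The limit is the classical
`θ * log (1 + c / θ) → c`.
-/

open Real Filter Set Topology

theorem strictMonoOn_of_hasDerivAt_pos {D : Set ℝ} (hD : Convex ℝ D) (hDo : IsOpen D)
    {f f' : ℝ → ℝ} (hf : ∀ x ∈ D, HasDerivAt f (f' x) x) (hf' : ∀ x ∈ D, 0 < f' x) :
    StrictMonoOn f D :=
  strictMonoOn_of_deriv_pos hD (fun x hx => (hf x hx).continuousAt.continuousWithinAt)
    fun x hx => by
      rw [hDo.interior_eq] at hx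
      rw [(hf x hx).deriv]; exact hf' x hx

theorem strictConcaveOn_of_hasDerivAt2_neg {D : Set ℝ} (hD : Convex ℝ D) (hDo : IsOpen D)
    {f f' f'' : ℝ → ℝ} (hf : ∀ x ∈ D, HasDerivAt f (f' x) x)
    (hf' : ∀ x ∈ D, HasDerivAt f' (f'' x) x) (hf'' : ∀ x ∈ D, f'' x < 0) :
    StrictConcaveOn ℝ D f := by
  have hf'_anti : StrictAntiOn f' D :=
    strictAntiOn_of_deriv_neg hD (fun x hx => (hf' x hx).continuousAt.continuousWithinAt)
      fun x hx => by
        rw [hDo.interior_eq] at hx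
        rw [(hf' x hx).deriv]; exact hf'' x hx
  refine StrictAntiOn.strictConcaveOn_of_deriv hD
    (fun x hx => (hf x hx).continuousAt.continuousWithinAt) ?_
  rw [hDo.interior_eq]
  exact hf'_anti.congr fun x hx => ((hf x hx).deriv).symm

section

variable {c θ : ℝ}

theorem hasDerivAt_add_div_self (hθ : θ ≠ 0) :
    HasDerivAt (fun x => (x + c) / x) (-c / θ ^ 2) θ :=
  (((hasDerivAt_id' θ).add_const c).div (hasDerivAt_id' θ) hθ).congr_deriv (by ring)

theorem hasDerivAt_div_mul_log_add_div_self (hθ : θ ≠ 0) (hθc : θ + c ≠ 0) :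
    HasDerivAt (fun x => x / c * log ((x + c) / x))
      ((log ((θ + c) / θ) - c / (θ + c)) / c) θ := by
  refine (((hasDerivAt_id' θ).div_const c).mul
    ((hasDerivAt_add_div_self hθ).log (div_ne_zero hθc hθ))).congr_deriv ?_
  field_simp
  ring

theorem hasDerivAt_log_add_div_self_sub_div_div (hθ : θ ≠ 0) (hθc : θ + c ≠ 0) :
    HasDerivAt (fun x => (log ((x + c) / x) - c / (x + c)) / c)
      (-(c / (θ * (θ + c) ^ 2))) θ := by
  have hr : HasDerivAt (fun x => c / (x + c)) (-c / (θ + c) ^ 2) θ :=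
    ((((hasDerivAt_id' θ).add_const c).fun_inv hθc).const_mul c).congr_deriv (by ring)
  refine (((hasDerivAt_add_div_self hθ).log (div_ne_zero hθc hθ)).sub hr).div_const c
    |>.congr_deriv ?_
  field_simp
  rw [show -(θ + c) - -θ = -c by ring, mul_neg, neg_div, mul_self_div_self]

theorem div_add_lt_log_add_div_self (hc : c ≠ 0) (hθ : 0 < θ) (hθc : 0 < θ + c) :
    c / (θ + c) < log ((θ + c) / θ) := by
  have hne : θ / (θ + c) ≠ 1 := by
    rw [Ne, div_eq_one_iff_eq hθc.ne']; intro h; exact hc (by linarith)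
  have := log_lt_sub_one_of_pos (div_pos hθ hθc) hne
  rw [← inv_div θ, log_inv]
  have : θ / (θ + c) - 1 = -(c / (θ + c)) := by field_simp; ring
  linarith

theorem strictMonoOn_div_mul_log_add_div_self (hc : 0 < c) :
    StrictMonoOn (fun θ => θ / c * log ((θ + c) / θ)) (Ioi 0) :=
  strictMonoOn_of_hasDerivAt_pos (convex_Ioi 0) isOpen_Ioi
    (fun θ (hθ : 0 < θ) => hasDerivAt_div_mul_log_add_div_self hθ.ne' (by linarith))
    fun θ (hθ : 0 < θ) =>
      div_pos (sub_pos.2 (div_add_lt_log_add_div_self hc.ne' hθ (by linarith))) hc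

theorem strictConcaveOn_div_mul_log_add_div_self (hc : 0 < c) :
    StrictConcaveOn ℝ (Ioi 0) (fun θ => θ / c * log ((θ + c) / θ)) := by
  refine strictConcaveOn_of_hasDerivAt2_neg (convex_Ioi 0) isOpen_Ioi
    (fun θ (hθ : 0 < θ) => hasDerivAt_div_mul_log_add_div_self hθ.ne' (by linarith))
    (fun θ (hθ : 0 < θ) => hasDerivAt_log_add_div_self_sub_div_div hθ.ne' (by linarith))
    fun θ (hθ : 0 < θ) => ?_
  have : 0 < θ + c := by linarith
  exact neg_neg_of_pos (by positivity)

theorem tendsto_div_mul_log_add_div_self_atTop (hc : c ≠ 0) :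
    Tendsto (fun θ => θ / c * log ((θ + c) / θ)) atTop (𝓝 1) := by
  have h := (tendsto_mul_log_one_add_div_atTop c).div_const c
  rw [div_self hc] at h
  refine h.congr' ?_
  filter_upwards [eventually_ne_atTop 0] with θ hθ
  rw [add_div, div_self hθ, add_comm, div_mul_eq_mul_div]

end

/-- `θ ↦ (θ/(d-2))·log((d+θ-2)/θ)` is strictly increasing and strictly
concave on `(0,∞)`, and tends to `1` as `θ → ∞`. -/
theorem diffusion_detection_monotone_concave (d : ℕ) (hd : 3 ≤ d) :
    StrictMonoOn (fun θ : ℝ => (θ / ((d : ℝ) - 2)) * Real.log (((d : ℝ) + θ - 2) / θ))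
      (Set.Ioi 0) ∧
    StrictConcaveOn ℝ (Set.Ioi 0)
      (fun θ : ℝ => (θ / ((d : ℝ) - 2)) * Real.log (((d : ℝ) + θ - 2) / θ)) ∧
    Tendsto (fun θ : ℝ => (θ / ((d : ℝ) - 2)) * Real.log (((d : ℝ) + θ - 2) / θ))
      atTop (nhds 1) := by
  have hc : (0 : ℝ) < d - 2 := by
    have : (3 : ℝ) ≤ d := by exact_mod_cast hd
    linarith
  have hfun : (fun θ : ℝ => θ / ((d : ℝ) - 2) * log (((d : ℝ) + θ - 2) / θ))
      = fun θ => θ / ((d : ℝ) - 2) * log ((θ + ((d : ℝ) - 2)) / θ) := by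
    funext θ
    rw [add_sub_right_comm, add_comm ((d : ℝ) - 2)]
  rw [hfun]
  exact ⟨strictMonoOn_div_mul_log_add_div_self hc, strictConcaveOn_div_mul_log_add_div_self hc,
    tendsto_div_mul_log_add_div_self_atTop hc.ne'⟩
end

section
/- For integer d ≥ 3, let I_{1/2}(a,b) denote the probability that a Beta(a,b) random variable lies in [0, 1/2). Then C_d = 1 - d·(1 - I_{1/2}(1/(d-2), 1 + 1/(d-2))) satisfies C_d ∈ (0, 1) for d sufficiently large, and lim_{d→∞} C_d exists and is positive. -/
/-!
Write `ε = 1 / (d - 2)`, so that `C_d = 1 - d (1 - I_{1/2}(ε, 1 + ε))` and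
`1 - I_{1/2}(ε, 1 + ε) = J(ε) / B(ε)` with `J = ∫_{1/2}^1 x^{ε-1} (1-x)^ε dx` and
`B = ∫_0^1 x^{ε-1} (1-x)^ε dx`. As `ε → 0⁺` the mass of `B` concentrates at `0`:
on `[0, 1/2]` the integrand lies between `2^{-ε} x^{ε-1}` and `x^{ε-1}`, whence `ε B(ε) → 1`,
while `J(ε) → ∫_{1/2}^1 dx / x = log 2` by dominated convergence. Hence
`1 - I_{1/2}(ε, 1 + ε) ∼ ε log 2`, and since `d ε → 1` we get `C_d → 1 - log 2 ∈ (0, 1)`.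
-/

open Real Filter

/-- The regularized incomplete beta function `I_{1/2}(a,b)`: the probability that a
`Beta(a,b)` random variable lies in `[0, 1/2)`. -/
noncomputable def regIncompleteBetaHalf (a b : ℝ) : ℝ :=
  (∫ x in (0 : ℝ)..(1 / 2), x ^ (a - 1) * (1 - x) ^ (b - 1)) /
    ∫ x in (0 : ℝ)..1, x ^ (a - 1) * (1 - x) ^ (b - 1)

/-- The limiting lower bound `C_d` on the reporting-centrality detection probability. -/
noncomputable def reportingCenterConst (d : ℕ) : ℝ :=
  1 - d * (1 - regIncompleteBetaHalf (1 / ((d : ℝ) - 2)) (1 + 1 / ((d : ℝ) - 2)))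

open MeasureTheory Set intervalIntegral Topology

noncomputable def betaKernel (a b x : ℝ) : ℝ := x ^ (a - 1) * (1 - x) ^ (b - 1)

section betaKernel

variable {a b x : ℝ}

lemma betaKernel_nonneg (hx0 : 0 ≤ x) (hx1 : x ≤ 1) : 0 ≤ betaKernel a b x :=
  mul_nonneg (rpow_nonneg hx0 _) (rpow_nonneg (by linarith) _)

lemma betaKernel_le_rpow (hb : 1 ≤ b) (hx0 : 0 ≤ x) (hx1 : x ≤ 1) :
    betaKernel a b x ≤ x ^ (a - 1) :=
  mul_le_of_le_one_right (rpow_nonneg hx0 _)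
    (rpow_le_one (by linarith) (by linarith) (by linarith))

lemma half_rpow_mul_rpow_le_betaKernel (hb : 1 ≤ b) (hx0 : 0 ≤ x) (hx : x ≤ 1 / 2) :
    (1 / 2) ^ (b - 1) * x ^ (a - 1) ≤ betaKernel a b x := by
  rw [betaKernel, mul_comm]
  gcongr
  linarith

lemma intervalIntegrable_betaKernel (ha : 0 < a) (hb : 1 ≤ b) {s t : ℝ}
    (hs : s ∈ Icc (0 : ℝ) 1) (ht : t ∈ Icc (0 : ℝ) 1) :
    IntervalIntegrable (betaKernel a b) volume s t := by
  have hmeas : Measurable (betaKernel a b) := by unfold betaKernel; fun_prop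
  have h01 : IntervalIntegrable (betaKernel a b) volume 0 1 := by
    refine (intervalIntegral.intervalIntegrable_rpow' (r := a - 1) (by linarith)).mono_fun
      hmeas.aestronglyMeasurable ?_
    rw [uIoc_of_le zero_le_one]
    filter_upwards [ae_restrict_mem measurableSet_Ioc] with x hx
    rw [norm_of_nonneg (betaKernel_nonneg hx.1.le hx.2), norm_of_nonneg (rpow_nonneg hx.1.le _)]
    exact betaKernel_le_rpow hb hx.1.le hx.2
  rw [← uIcc_of_le zero_le_one] at hs ht
  exact h01.mono_set (uIcc_subset_uIcc hs ht)

lemma integral_rpow_sub_one_of_pos (ha : 0 < a) (t : ℝ) :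
    ∫ x in (0 : ℝ)..t, x ^ (a - 1) = t ^ a / a := by
  rw [integral_rpow (Or.inl (by linarith)), sub_add_cancel, zero_rpow ha.ne', sub_zero]

lemma integral_betaKernel_zero_half_le (ha : 0 < a) (hb : 1 ≤ b) :
    ∫ x in (0 : ℝ)..1 / 2, betaKernel a b x ≤ (1 / 2) ^ a / a := by
  rw [← integral_rpow_sub_one_of_pos ha]
  refine integral_mono_on (by norm_num)
    (intervalIntegrable_betaKernel ha hb (by norm_num) (by norm_num))
    (intervalIntegral.intervalIntegrable_rpow' (by linarith)) fun x hx => ?_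
  exact betaKernel_le_rpow hb hx.1 (by linarith [hx.2])

lemma le_integral_betaKernel_zero_half (ha : 0 < a) (hb : 1 ≤ b) :
    (1 / 2) ^ (b - 1) * ((1 / 2) ^ a / a) ≤ ∫ x in (0 : ℝ)..1 / 2, betaKernel a b x := by
  rw [← integral_rpow_sub_one_of_pos ha, ← intervalIntegral.integral_const_mul]
  refine integral_mono_on (by norm_num)
    ((intervalIntegral.intervalIntegrable_rpow' (by linarith)).const_mul _)
    (intervalIntegrable_betaKernel ha hb (by norm_num) (by norm_num)) fun x hx => ?_
  exact half_rpow_mul_rpow_le_betaKernel hb hx.1 hx.2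

lemma integral_betaKernel_pos (ha : 0 < a) (hb : 1 ≤ b) :
    0 < ∫ x in (0 : ℝ)..1, betaKernel a b x := by
  have hI : 0 < ∫ x in (0 : ℝ)..1 / 2, betaKernel a b x :=
    (by positivity : (0 : ℝ) < (1 / 2) ^ (b - 1) * ((1 / 2) ^ a / a)).trans_le
      (le_integral_betaKernel_zero_half ha hb)
  have hJ : 0 ≤ ∫ x in (1 / 2 : ℝ)..1, betaKernel a b x :=
    integral_nonneg (by norm_num) fun x hx => betaKernel_nonneg (by linarith [hx.1]) hx.2
  rw [← integral_add_adjacent_intervals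
    (intervalIntegrable_betaKernel ha hb (t := 1 / 2) (by norm_num) (by norm_num))
    (intervalIntegrable_betaKernel ha hb (by norm_num) (by norm_num))]
  linarith

lemma one_sub_regIncompleteBetaHalf (ha : 0 < a) (hb : 1 ≤ b) :
    1 - regIncompleteBetaHalf a b =
      (∫ x in (1 / 2 : ℝ)..1, betaKernel a b x) / ∫ x in (0 : ℝ)..1, betaKernel a b x := by
  have hB := (integral_betaKernel_pos ha hb).ne'
  rw [← integral_interval_sub_left
    (intervalIntegrable_betaKernel ha hb (s := 0) (t := 1) (by norm_num) (by norm_num))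
    (intervalIntegrable_betaKernel ha hb (t := 1 / 2) (by norm_num) (by norm_num)),
    sub_div, div_self hB]
  rfl

end betaKernel

lemma tendsto_half_rpow_nhdsGT_zero :
    Tendsto (fun a : ℝ => (1 / 2 : ℝ) ^ a) (𝓝[>] 0) (𝓝 1) := by
  have := (continuousAt_const_rpow (a := (1 / 2 : ℝ)) (b := 0) (by norm_num)).tendsto
  rw [rpow_zero] at this
  exact this.mono_left nhdsWithin_le_nhds

lemma tendsto_mul_integral_betaKernel_zero_half :
    Tendsto (fun a => a * ∫ x in (0 : ℝ)..1 / 2, betaKernel a (1 + a) x)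
      (𝓝[>] 0) (𝓝 1) := by
  have hlow := tendsto_half_rpow_nhdsGT_zero.mul tendsto_half_rpow_nhdsGT_zero
  rw [mul_one] at hlow
  refine tendsto_of_tendsto_of_tendsto_of_le_of_le' hlow tendsto_half_rpow_nhdsGT_zero ?_ ?_
  all_goals filter_upwards [self_mem_nhdsWithin] with a (ha : 0 < a)
  · have h := mul_le_mul_of_nonneg_left
      (le_integral_betaKernel_zero_half (b := 1 + a) ha (by linarith)) ha.le
    rwa [add_sub_cancel_left, mul_left_comm, mul_div_cancel₀ _ ha.ne'] at h
  · have h := mul_le_mul_of_nonneg_left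
      (integral_betaKernel_zero_half_le (b := 1 + a) ha (by linarith)) ha.le
    rwa [mul_div_cancel₀ _ ha.ne'] at h

lemma tendsto_integral_betaKernel_half_one :
    Tendsto (fun a => ∫ x in (1 / 2 : ℝ)..1, betaKernel a (1 + a) x)
      (𝓝[>] 0) (𝓝 (log 2)) := by
  have hlog : log 2 = ∫ x in (1 / 2 : ℝ)..1, x⁻¹ := by
    rw [integral_inv_of_pos (by norm_num) (by norm_num)]
    norm_num
  rw [hlog]
  refine tendsto_integral_filter_of_dominated_convergence (fun x => x⁻¹) ?_ ?_ ?_ ?_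
  · filter_upwards with a
    exact (by unfold betaKernel; fun_prop : Measurable (betaKernel a (1 + a))).aestronglyMeasurable
  · filter_upwards [self_mem_nhdsWithin] with a (ha : 0 < a)
    filter_upwards with x hx
    rw [uIoc_of_le (by norm_num)] at hx
    have hx0 : 0 < x := by linarith [hx.1]
    rw [norm_of_nonneg (betaKernel_nonneg hx0.le hx.2), ← rpow_neg_one]
    exact (betaKernel_le_rpow (by linarith) hx0.le hx.2).trans
      (rpow_le_rpow_of_exponent_ge hx0 hx.2 (by linarith))
  · exact intervalIntegrable_inv (fun x hx => by
      rw [uIcc_of_le (by norm_num)] at hx; linarith [hx.1]) continuousOn_id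
  -- Pointwise convergence fails at `x = 1`, where `(1 - x) ^ a` jumps from `0` to `0 ^ 0 = 1`.
  · filter_upwards [compl_mem_ae_iff.2 (measure_singleton (1 : ℝ))] with x (hx1 : x ≠ 1) hx
    rw [uIoc_of_le (by norm_num)] at hx
    have hx0 : 0 < x := by linarith [hx.1]
    have hx1' : 0 < 1 - x := by have := lt_of_le_of_ne hx.2 hx1; linarith
    have hcont : ContinuousAt (fun a : ℝ => betaKernel a (1 + a) x) 0 := by
      unfold betaKernel
      exact ((continuousAt_const_rpow hx0.ne').comp (by fun_prop)).mul
        ((continuousAt_const_rpow hx1'.ne').comp (by fun_prop))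
    have := hcont.tendsto
    simp only [betaKernel, zero_sub, rpow_neg_one, add_zero, sub_self, rpow_zero, mul_one] at this
    exact this.mono_left nhdsWithin_le_nhds

lemma tendsto_mul_integral_betaKernel :
    Tendsto (fun a => a * ∫ x in (0 : ℝ)..1, betaKernel a (1 + a) x) (𝓝[>] 0) (𝓝 1) := by
  have hid : Tendsto (fun a : ℝ => a) (𝓝[>] 0) (𝓝 0) := nhdsWithin_le_nhds
  have := tendsto_mul_integral_betaKernel_zero_half.add
    (hid.mul tendsto_integral_betaKernel_half_one)
  rw [zero_mul, add_zero] at this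
  refine this.congr' ?_
  filter_upwards [self_mem_nhdsWithin] with a (ha : 0 < a)
  rw [← mul_add, integral_add_adjacent_intervals
    (intervalIntegrable_betaKernel ha (b := 1 + a) (t := 1 / 2) (by linarith)
      (by norm_num) (by norm_num))
    (intervalIntegrable_betaKernel ha (by linarith) (by norm_num) (by norm_num))]

theorem tendsto_one_sub_regIncompleteBetaHalf_div :
    Tendsto (fun a => (1 - regIncompleteBetaHalf a (1 + a)) / a) (𝓝[>] 0) (𝓝 (log 2)) := by
  have := tendsto_integral_betaKernel_half_one.div tendsto_mul_integral_betaKernel one_ne_zero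
  rw [div_one] at this
  refine this.congr' ?_
  filter_upwards [self_mem_nhdsWithin] with a (ha : 0 < a)
  rw [Pi.div_apply, one_sub_regIncompleteBetaHalf ha (by linarith), div_div, mul_comm]

lemma tendsto_reportingCenterConst :
    Tendsto reportingCenterConst atTop (𝓝 (1 - log 2)) := by
  have hshift : Tendsto (fun d : ℕ => (d : ℝ) - 2) atTop atTop :=
    tendsto_atTop_add_const_right _ _ tendsto_natCast_atTop_atTop
  have hε : Tendsto (fun d : ℕ => 1 / ((d : ℝ) - 2)) atTop (𝓝[>] 0) := by
    simp only [one_div]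
    exact tendsto_inv_atTop_nhdsGT_zero.comp hshift
  have hratio : Tendsto (fun d : ℕ => (d : ℝ) / ((d : ℝ) - 2)) atTop (𝓝 1) := by
    simpa only [sub_eq_add_neg] using tendsto_natCast_div_add_atTop (-2 : ℝ)
  have := tendsto_const_nhds (x := (1 : ℝ)).sub
    (hratio.mul (tendsto_one_sub_regIncompleteBetaHalf_div.comp hε))
  rw [one_mul] at this
  refine this.congr' ?_
  filter_upwards [eventually_gt_atTop 2] with d hd
  have hd' : (d : ℝ) - 2 ≠ 0 := by
    have : (2 : ℝ) < d := by exact_mod_cast hd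
    linarith
  simp only [reportingCenterConst, Function.comp_apply]
  field_simp

/-- `C_d ∈ (0,1)` for all sufficiently large `d`, and `C_d` converges
to a positive limit as `d → ∞`. -/
theorem reporting_center_const_positive :
    (∀ᶠ d : ℕ in atTop, reportingCenterConst d ∈ Set.Ioo (0 : ℝ) 1) ∧
    ∃ L : ℝ, 0 < L ∧ Tendsto reportingCenterConst atTop (nhds L) := by
  have hL0 : 0 < 1 - log 2 := by linarith [log_two_lt_d9]
  have hL1 : 1 - log 2 < 1 := by linarith [log_pos one_lt_two]
  exact ⟨tendsto_reportingCenterConst (Ioo_mem_nhds hL0 hL1),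
    1 - log 2, hL0, tendsto_reportingCenterConst⟩
end
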